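/- Let S be a semigroup, T a subsemigroup of S, and fix a transversal {h_i : i ∈ I} of the ℋ^T-classes contained in S \ T, with the convention h_1 = 1 ∈ S^1 and I^1 = I ∪ {1}. Then for every i ∈ I^1 and all s_1, s_2, …, s_n ∈ S there exist t_1, …, t_n ∈ T^1 and j ∈ I^1 such that h_i s_1 s_2 ⋯ s_n = t_1 t_2 ⋯ t_n h_j in S^1. Moreover, if all s_q lie in T, then: (i) if h_i s_1 ⋯ s_n ∉ T then h_i s_1 ⋯ s_n ℒ^T h_j; (ii) if h_i s_1 ⋯ s_n ∈ T then j = 1 (so h_j = 1); (iii) if h_i s_1 ⋯ s_n ℛ^T h_i then h_i s_1 ⋯ s_n ℋ^T h_j. -/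
import Mathlib


namespace GreenIndexPaper

variable {S : Type*} [Semigroup S]

/-- The subset `u·T¹ = {u} ∪ uT` of `S` (equivalently, `u T¹` computed in `S¹`). -/
def rset (T : Subsemigroup S) (u : S) : Set S := insert u {x | ∃ t ∈ T, x = u * t}

/-- The subset `T¹·u = {u} ∪ Tu` of `S`. -/
def lset (T : Subsemigroup S) (u : S) : Set S := insert u {x | ∃ t ∈ T, x = t * u}

/-- The relative Green relation `ℛ^T`. -/
def RrelT (T : Subsemigroup S) (u v : S) : Prop := rset T u = rset T v

/-- The relative Green relation `ℒ^T`. -/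
def LrelT (T : Subsemigroup S) (u v : S) : Prop := lset T u = lset T v

/-- The relative Green relation `ℋ^T = ℛ^T ∩ ℒ^T`. -/
def HrelT (T : Subsemigroup S) (u v : S) : Prop := RrelT T u v ∧ LrelT T u v

/-- `H` is an `ℋ^T`-class of `S`. -/
def IsHClassIn (T : Subsemigroup S) (H : Set S) : Prop := ∃ a : S, H = {x | HrelT T a x}

/-- `T` has finite Green index in `S`: the complement `S \ T` is a union of finitely many
`ℋ^T`-classes. -/
def FiniteGreenIndex (T : Subsemigroup S) : Prop :=
  ∃ F : Finset S, (∀ c ∈ F, c ∉ T) ∧ ∀ s : S, s ∉ T → ∃ c ∈ F, HrelT T s c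

/-- The subset `T¹ = T ∪ {1}` of `S¹ = WithOne S`. -/
def T1 (T : Subsemigroup S) : Set (WithOne S) := insert 1 ((↑) '' (T : Set S))

/-- The subset `H·t` of `S¹`, for `H ⊆ S` and `t ∈ S¹`. -/
def setMulR (H : Set S) (t : WithOne S) : Set (WithOne S) :=
  {x | ∃ h ∈ H, x = (h : WithOne S) * t}

/-- The stabilizer `Stab(H) = {t ∈ T¹ : Ht = H}`, as a subset of `S¹`. -/
def stabSet (T : Subsemigroup S) (H : Set S) : Set (WithOne S) :=
  {t | t ∈ T1 T ∧ setMulR H t = (↑) '' H}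

theorem one_mem_stabSet (T : Subsemigroup S) (H : Set S) : (1 : WithOne S) ∈ stabSet T H := by
  refine ⟨Set.mem_insert _ _, ?_⟩
  ext x
  constructor
  · rintro ⟨h, hh, rfl⟩
    exact ⟨h, hh, (mul_one _).symm⟩
  · rintro ⟨h, hh, rfl⟩
    exact ⟨h, hh, (mul_one _).symm⟩

theorem mul_mem_stabSet {T : Subsemigroup S} {H : Set S} {s t : WithOne S}
    (hs : s ∈ stabSet T H) (ht : t ∈ stabSet T H) : s * t ∈ stabSet T H := by
  obtain ⟨hsT, hsH⟩ := hs
  obtain ⟨htT, htH⟩ := ht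
  constructor
  · rcases hsT with rfl | ⟨s', hs', rfl⟩
    · rwa [one_mul]
    · rcases htT with rfl | ⟨t', ht', rfl⟩
      · rw [mul_one]; exact Or.inr ⟨s', hs', rfl⟩
      · exact Or.inr ⟨s' * t', T.mul_mem hs' ht', rfl⟩
  · ext x
    constructor
    · rintro ⟨h, hh, rfl⟩
      have h1 : (h : WithOne S) * s ∈ setMulR H s := ⟨h, hh, rfl⟩
      rw [hsH] at h1
      obtain ⟨g, hg, hgs⟩ := h1
      have h2 : (g : WithOne S) * t ∈ setMulR H t := ⟨g, hg, rfl⟩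
      rw [htH] at h2
      obtain ⟨k, hk, hkt⟩ := h2
      refine ⟨k, hk, ?_⟩
      rw [hkt, hgs, ← mul_assoc]
    · rintro ⟨k, hk, rfl⟩
      have h2 : ((k : WithOne S)) ∈ setMulR H t := by
        rw [htH]; exact ⟨k, hk, rfl⟩
      obtain ⟨g, hg, hgt⟩ := h2
      have h1 : ((g : WithOne S)) ∈ setMulR H s := by
        rw [hsH]; exact ⟨g, hg, rfl⟩
      obtain ⟨h, hh, hhs⟩ := h1
      exact ⟨h, hh, by rw [hgt, hhs, mul_assoc]⟩

/-- The stabilizer `Stab(H)` as a submonoid of `S¹`. -/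
def stabSubmonoid (T : Subsemigroup S) (H : Set S) : Submonoid (WithOne S) where
  carrier := stabSet T H
  one_mem' := one_mem_stabSet T H
  mul_mem' := mul_mem_stabSet

/-- The Schützenberger congruence `γ(H)` on `Stab(H)`. -/
def gammaCon (T : Subsemigroup S) (H : Set S) : Con (stabSubmonoid T H) where
  r x y := ∀ h ∈ H, (h : WithOne S) * (x : WithOne S) = (h : WithOne S) * (y : WithOne S)
  iseqv := ⟨fun _ _ _ => rfl, fun hxy h hh => (hxy h hh).symm,
    fun h1 h2 h hh => (h1 h hh).trans (h2 h hh)⟩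
  mul' := by
    rintro ⟨w, hwT, hwH⟩ ⟨x, hxT, hxH⟩ ⟨y, hyT, hyH⟩ ⟨z, hzT, hzH⟩ hwx hyz h hh
    have h1 : (h : WithOne S) * w ∈ setMulR H w := ⟨h, hh, rfl⟩
    rw [hwH] at h1
    obtain ⟨g, hg, hgw⟩ := h1
    have key : (h : WithOne S) * (w * y) = (h : WithOne S) * (x * z) := by
      calc (h : WithOne S) * (w * y) = ((h : WithOne S) * w) * y := by rw [mul_assoc]
        _ = (g : WithOne S) * y := by rw [hgw]
        _ = (g : WithOne S) * z := hyz g hg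
        _ = ((h : WithOne S) * w) * z := by rw [hgw]
        _ = ((h : WithOne S) * x) * z := by rw [hwx h hh]
        _ = (h : WithOne S) * (x * z) := by rw [mul_assoc]
    exact key

/-- The relative Schützenberger group `Γ(H) = Stab(H)/γ(H)`. -/
abbrev SchGroup (T : Subsemigroup S) (H : Set S) := (gammaCon T H).Quotient

/-- Representatives `h_i` for `i ∈ I¹ = I ∪ {1}`, with `h_1 = 1 ∈ S¹`. -/
def repOne {ι : Type*} (h : ι → S) : Option ι → WithOne S :=
  fun o => o.elim 1 fun i => (h i : WithOne S)

/-- `S` is finitely presented as a semigroup. -/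
def SemigroupFP (S : Type*) [Semigroup S] : Prop :=
  ∃ (n : ℕ) (π : FreeSemigroup (Fin n) →ₙ* S), Function.Surjective π ∧
    ∃ R : Finset (FreeSemigroup (Fin n) × FreeSemigroup (Fin n)),
      ∀ u v, (conGen fun x y => (x, y) ∈ R) u v ↔ π u = π v

/-- `M` is finitely presented as a monoid. -/
def MonoidFP (M : Type*) [Monoid M] : Prop :=
  ∃ (n : ℕ) (π : FreeMonoid (Fin n) →* M), Function.Surjective π ∧
    ∃ R : Finset (FreeMonoid (Fin n) × FreeMonoid (Fin n)),
      ∀ u v, (conGen fun x y => (x, y) ∈ R) u v ↔ π u = π v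

/-- A left ideal of a semigroup. -/
def IsLeftIdeal (L : Set S) : Prop := L.Nonempty ∧ ∀ s : S, ∀ x ∈ L, s * x ∈ L

/-- A right ideal of a semigroup. -/
def IsRightIdeal (R : Set S) : Prop := R.Nonempty ∧ ∀ s : S, ∀ x ∈ R, x * s ∈ R

/-- Residual finiteness: distinct elements can be separated by a homomorphism
into a finite semigroup. -/
def ResiduallyFiniteMul (M : Type*) [Mul M] : Prop :=
  ∀ x y : M, x ≠ y → ∃ (F : Type) (_ : Semigroup F) (_ : Finite F) (φ : M →ₙ* F), φ x ≠ φ y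

/-- `T` has finite Green index inside the subsemigroup `Ssub` of the ambient semigroup:
`Ssub \ T` is a union of finitely many `ℋ^T`-classes. -/
def FiniteGreenIndexIn (Ssub T : Subsemigroup S) : Prop :=
  ∃ F : Finset S, (∀ c ∈ F, c ∈ Ssub ∧ c ∉ T) ∧ ∀ s ∈ Ssub, s ∉ T → ∃ c ∈ F, HrelT T s c

/-- A subsemigroup is a group under the induced operation. -/
def IsGroupSub (T : Subsemigroup S) : Prop :=
  ∃ e ∈ T, (∀ t ∈ T, e * t = t ∧ t * e = t) ∧ ∀ t ∈ T, ∃ t' ∈ T, t * t' = e ∧ t' * t = e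

/-- The (out-)ball of radius `n`: elements expressible as a product of at most `n`
(and at least one) elements of `A`. -/
def ball (A : Finset S) (n : ℕ) : Set S :=
  {s | ∃ l : List S, l ≠ [] ∧ l.length ≤ n ∧ (∀ x ∈ l, x ∈ A) ∧
    (l.map ((↑) : S → WithOne S)).prod = (s : WithOne S)}

/-- The growth function of a semigroup with respect to a finite set `A`. -/
noncomputable def growth (A : Finset S) (n : ℕ) : ℕ := (ball A n).ncard

end GreenIndexPaper

open GreenIndexPaper

section Aux

variable {S : Type*} [Semigroup S] {T : Subsemigroup S}

lemma mem_lset_self (T : Subsemigroup S) (u : S) : u ∈ lset T u := Set.mem_insert _ _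

lemma mem_rset_self (T : Subsemigroup S) (u : S) : u ∈ rset T u := Set.mem_insert _ _

lemma lset_mul (T : Subsemigroup S) (u s : S) :
    lset T (u * s) = (fun w => w * s) '' lset T u := by
  ext x
  simp only [lset, Set.mem_insert_iff, Set.mem_image, Set.mem_setOf_eq]
  constructor
  · rintro (rfl | ⟨t, ht, rfl⟩)
    · exact ⟨u, Or.inl rfl, rfl⟩
    · exact ⟨t * u, Or.inr ⟨t, ht, rfl⟩, mul_assoc _ _ _⟩
  · rintro ⟨w, (rfl | ⟨t, ht, rfl⟩), rfl⟩
    · exact Or.inl rfl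
    · exact Or.inr ⟨t, ht, mul_assoc _ _ _⟩

lemma lrel_mul_right {u v : S} (huv : LrelT T u v) (s : S) : LrelT T (u * s) (v * s) := by
  unfold LrelT
  rw [lset_mul, lset_mul, huv]

lemma lrel_mem_T {u v : S} (huv : LrelT T u v) (hu : u ∈ T) : v ∈ T := by
  have hv : v ∈ lset T u := by rw [huv]; exact mem_lset_self T v
  rcases hv with rfl | ⟨t, ht, rfl⟩
  · exact hu
  · exact T.mul_mem ht hu

lemma rrel_mem_T {u v : S} (huv : RrelT T u v) (hu : u ∈ T) : v ∈ T := by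
  have hv : v ∈ rset T u := by rw [huv]; exact mem_rset_self T v
  rcases hv with rfl | ⟨t, ht, rfl⟩
  · exact hu
  · exact T.mul_mem hu ht

lemma rset_subset {u v : S} (huv : u ∈ rset T v) : rset T u ⊆ rset T v := by
  rcases huv with rfl | ⟨t, ht, rfl⟩
  · exact subset_rfl
  · rintro x (rfl | ⟨t', ht', rfl⟩)
    · exact Or.inr ⟨t, ht, rfl⟩
    · exact Or.inr ⟨t * t', T.mul_mem ht ht', mul_assoc _ _ _⟩

/-- A fragment of the relative Green's lemma. -/
lemma green_R {y p z : S} (hp : p ∈ T) (hy : rset T y = rset T (y * p))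
    (hz : lset T z = lset T y) : rset T z = rset T (z * p) := by
  have hz' : z ∈ lset T y := by rw [← hz]; exact mem_lset_self T z
  have hy' : y ∈ rset T (y * p) := by rw [← hy]; exact mem_rset_self T y
  have key : z ∈ rset T (z * p) := by
    rcases hz' with rfl | ⟨c, hc, rfl⟩
    · exact hy'
    · rcases hy' with h1 | ⟨b, hb, h1⟩
      · exact Or.inl (by rw [mul_assoc, ← h1])
      · exact Or.inr ⟨b, hb, by
          rw [mul_assoc (c * y) p b, mul_assoc c y (p * b), ← mul_assoc y p b, ← h1]⟩
  exact Set.Subset.antisymm (rset_subset key) (rset_subset (Or.inr ⟨p, hp, rfl⟩))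

lemma prod_coe_T {l : List S} (hne : l ≠ []) (hT : ∀ s ∈ l, s ∈ T) :
    ∃ p ∈ T, (l.map ((↑) : S → WithOne S)).prod = (p : WithOne S) := by
  induction l with
  | nil => exact absurd rfl hne
  | cons s l ih =>
    rcases eq_or_ne l [] with rfl | hl
    · exact ⟨s, hT s (.head _), by simp⟩
    · obtain ⟨p, hp, hps⟩ := ih hl (fun x hx => hT x (.tail _ hx))
      exact ⟨s * p, T.mul_mem (hT s (.head _)) hp,
        by rw [List.map_cons, List.prod_cons, hps, ← WithOne.coe_mul]⟩

end Aux

/-- the Rewriting Lemma. -/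
theorem rewriting_lemma
    {S : Type*} {ι : Type*} [Semigroup S] (T : Subsemigroup S) (h : ι → S)
    (hrep : ∀ i, h i ∉ T)
    (hcover : ∀ s : S, s ∉ T → ∃ i, HrelT T s (h i))
    (hdistinct : ∀ i j, HrelT T (h i) (h j) → i = j) :
    ∀ (i : Option ι) (l : List S),
      ∃ (ts : List (WithOne S)) (j : Option ι),
        ts.length = l.length ∧ (∀ t ∈ ts, t ∈ T1 T) ∧
        repOne h i * (l.map ((↑) : S → WithOne S)).prod = ts.prod * repOne h j ∧
        ((∀ s ∈ l, s ∈ T) →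
          ((∀ x : S, (x : WithOne S) = repOne h i * (l.map ((↑) : S → WithOne S)).prod →
              x ∉ T → ∃ j' : ι, j = some j' ∧ LrelT T x (h j')) ∧
           (repOne h i * (l.map ((↑) : S → WithOne S)).prod ∈ T1 T → j = none) ∧
           (∀ i' : ι, i = some i' →
             ∀ x : S, (x : WithOne S) = repOne h i * (l.map ((↑) : S → WithOne S)).prod →
               RrelT T x (h i') → ∃ j' : ι, j = some j' ∧ HrelT T x (h j')))) := by
  intro i l
  induction l generalizing i with
  | nil =>
    refine ⟨[], i, rfl, by simp, by simp, ?_⟩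
    intro _
    refine ⟨?_, ?_, ?_⟩
    · intro x hx hxT
      simp only [List.map_nil, List.prod_nil, mul_one] at hx
      match i with
      | none => exact absurd hx (WithOne.coe_ne_one)
      | some i' =>
        have hxeq : x = h i' := WithOne.coe_inj.mp hx
        exact ⟨i', rfl, by rw [hxeq]; exact rfl⟩
    · intro hmem
      match i with
      | none => rfl
      | some i' =>
        exfalso
        simp only [List.map_nil, List.prod_nil, mul_one] at hmem
        rcases hmem with h1 | ⟨p, hp, h1⟩
        · exact WithOne.coe_ne_one h1
        · exact hrep i' ((WithOne.coe_inj.mp h1) ▸ hp)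
    · intro i' hi x hx hR
      subst hi
      simp only [List.map_nil, List.prod_nil, mul_one] at hx
      have hxeq : x = h i' := WithOne.coe_inj.mp hx
      exact ⟨i', rfl, hR, by rw [hxeq]; exact rfl⟩
  | cons s l' IH =>
    obtain ⟨y, hy⟩ : ∃ y : S, (y : WithOne S) = repOne h i * (s : WithOne S) := by
      match i with
      | none => exact ⟨s, (one_mul _).symm⟩
      | some i' => exact ⟨h i' * s, WithOne.coe_mul _ _⟩
    have key : repOne h i * ((s :: l').map ((↑) : S → WithOne S)).prod
        = (y : WithOne S) * (l'.map ((↑) : S → WithOne S)).prod := by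
      rw [List.map_cons, List.prod_cons, ← mul_assoc, ← hy]
    by_cases hyT : y ∈ T
    · -- the accumulated prefix falls into T; continue from the identity
      obtain ⟨ts', j, hlen, hmem, heq, hmor⟩ := IH none
      have h1 : repOne h none = (1 : WithOne S) := rfl
      refine ⟨(y : WithOne S) :: ts', j, by simp [hlen], ?_, ?_, ?_⟩
      · intro u hu
        rcases List.mem_cons.mp hu with rfl | hu
        · exact Or.inr ⟨y, hyT, rfl⟩
        · exact hmem u hu
      · rw [key, List.prod_cons, mul_assoc, ← heq, h1, one_mul]
      · intro hT
        have hs : s ∈ T := hT s (.head _)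
        have hl' : ∀ x ∈ l', x ∈ T := fun x hx => hT x (.tail _ hx)
        have hmor' := hmor hl'
        have hxT : ∀ x : S, (x : WithOne S) =
            repOne h i * ((s :: l').map ((↑) : S → WithOne S)).prod → x ∈ T := by
          intro x hx
          rw [key] at hx
          rcases eq_or_ne l' [] with rfl | hne
          · simp only [List.map_nil, List.prod_nil, mul_one] at hx
            exact (WithOne.coe_inj.mp hx) ▸ hyT
          · obtain ⟨p, hp, hps⟩ := prod_coe_T hne hl'
            rw [hps, ← WithOne.coe_mul] at hx
            exact (WithOne.coe_inj.mp hx) ▸ T.mul_mem hyT hp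
        have hjnone : j = none := by
          apply hmor'.2.1
          rw [h1, one_mul]
          rcases eq_or_ne l' [] with rfl | hne
          · exact Or.inl (by simp)
          · obtain ⟨p, hp, hps⟩ := prod_coe_T hne hl'
            exact Or.inr ⟨p, hp, hps.symm⟩
        refine ⟨?_, ?_, ?_⟩
        · intro x hx hxnT
          exact absurd (hxT x hx) hxnT
        · intro _
          exact hjnone
        · intro i' hi x hx hR
          exact absurd (rrel_mem_T hR (hxT x hx)) (hrep i')
    · -- the accumulated prefix stays outside T
      obtain ⟨j₁, hyR, hyL⟩ := hcover y hyT
      have hy_mem : y ∈ lset T (h j₁) := by rw [← hyL]; exact mem_lset_self T y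
      obtain ⟨t, htT1, hty⟩ : ∃ t : WithOne S, t ∈ T1 T ∧
          (y : WithOne S) = t * (h j₁ : WithOne S) := by
        rcases hy_mem with h1 | ⟨c, hc, h1⟩
        · exact ⟨1, Set.mem_insert _ _, by rw [h1, one_mul]⟩
        · exact ⟨(c : WithOne S), Or.inr ⟨c, hc, rfl⟩, by rw [h1, WithOne.coe_mul]⟩
      obtain ⟨ts', j, hlen, hmem, heq, hmor⟩ := IH (some j₁)
      have hrep1 : repOne h (some j₁) = ((h j₁ : S) : WithOne S) := rfl
      refine ⟨t :: ts', j, by simp [hlen], ?_, ?_, ?_⟩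
      · intro u hu
        rcases List.mem_cons.mp hu with rfl | hu
        · exact htT1
        · exact hmem u hu
      · rw [key, List.prod_cons, mul_assoc, ← heq, hrep1, ← mul_assoc, ← hty]
      · intro hT
        have hs : s ∈ T := hT s (.head _)
        have hl' : ∀ x ∈ l', x ∈ T := fun x hx => hT x (.tail _ hx)
        have hmor' := hmor hl'
        rcases eq_or_ne l' [] with rfl | hne
        · -- empty tail : x = y
          have hxy : ∀ x : S, (x : WithOne S) =
              repOne h i * (([s] : List S).map ((↑) : S → WithOne S)).prod → x = y := by
            intro x hx
            rw [key] at hx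
            simp only [List.map_nil, List.prod_nil, mul_one] at hx
            exact WithOne.coe_inj.mp hx
          have hx'eq : ((h j₁ : S) : WithOne S) =
              repOne h (some j₁) * (([] : List S).map ((↑) : S → WithOne S)).prod := by
            simp [hrep1]
          refine ⟨?_, ?_, ?_⟩
          · intro x hx hxnT
            obtain ⟨j', hj', hLj⟩ := hmor'.1 (h j₁) hx'eq (hrep j₁)
            exact ⟨j', hj', by rw [hxy x hx]; exact hyL.trans hLj⟩
          · intro hmem1
            exfalso
            rw [key] at hmem1
            simp only [List.map_nil, List.prod_nil, mul_one] at hmem1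
            rcases hmem1 with h1 | ⟨p, hp, h1⟩
            · exact WithOne.coe_ne_one h1
            · exact hyT ((WithOne.coe_inj.mp h1) ▸ hp)
          · intro i' hi x hx hR
            obtain ⟨j', hj', hHj⟩ := hmor'.2.2 j₁ rfl (h j₁) hx'eq rfl
            refine ⟨j', hj', ?_, ?_⟩
            · rw [hxy x hx]; exact hyR.trans hHj.1
            · rw [hxy x hx]; exact hyL.trans hHj.2
        · -- nonempty tail : x = y * p
          obtain ⟨p, hp, hps⟩ := prod_coe_T hne hl'
          have hxy : ∀ x : S, (x : WithOne S) =
              repOne h i * ((s :: l').map ((↑) : S → WithOne S)).prod → x = y * p := by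
            intro x hx
            rw [key, hps, ← WithOne.coe_mul] at hx
            exact WithOne.coe_inj.mp hx
          have hx'eq : ((h j₁ * p : S) : WithOne S) =
              repOne h (some j₁) * (l'.map ((↑) : S → WithOne S)).prod := by
            rw [WithOne.coe_mul, hps, hrep1]
          have hLxx' : LrelT T (y * p) (h j₁ * p) := lrel_mul_right hyL p
          refine ⟨?_, ?_, ?_⟩
          · intro x hx hxnT
            have hxyp : x = y * p := hxy x hx
            have hx'nT : h j₁ * p ∉ T := by
              intro hmem2
              exact hxnT (hxyp ▸ lrel_mem_T (T := T) hLxx'.symm hmem2)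
            obtain ⟨j', hj', hLj⟩ := hmor'.1 (h j₁ * p) hx'eq hx'nT
            exact ⟨j', hj', by rw [hxyp]; exact hLxx'.trans hLj⟩
          · intro hmem1
            rw [key, hps, ← WithOne.coe_mul] at hmem1
            have hypT : y * p ∈ T := by
              rcases hmem1 with h1 | ⟨q, hq, h1⟩
              · exact absurd h1 (WithOne.coe_ne_one)
              · exact (WithOne.coe_inj.mp h1) ▸ hq
            have hx'T : h j₁ * p ∈ T := lrel_mem_T hLxx' hypT
            apply hmor'.2.1
            rw [← hx'eq]
            exact Or.inr ⟨_, hx'T, rfl⟩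
          · intro i' hi x hx hR
            subst hi
            have hxyp : x = y * p := hxy x hx
            have hys : y = h i' * s := WithOne.coe_inj.mp (by rw [hy]; rfl)
            have h1 : rset T x ⊆ rset T y := by
              rw [hxyp]; exact rset_subset (Or.inr ⟨p, hp, rfl⟩)
            have h2 : rset T y ⊆ rset T x := by
              rw [hR]
              exact rset_subset (Or.inr ⟨s, hs, hys⟩)
            have hyx : rset T y = rset T (y * p) := by
              rw [← hxyp]; exact Set.Subset.antisymm h2 h1
            have hGreen : rset T (h j₁) = rset T (h j₁ * p) :=
              green_R hp hyx hyL.symm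
            obtain ⟨j', hj', hHj⟩ := hmor'.2.2 j₁ rfl (h j₁ * p) hx'eq hGreen.symm
            refine ⟨j', hj', ?_, ?_⟩
            · calc rset T x = rset T (y * p) := by rw [hxyp]
                _ = rset T y := hyx.symm
                _ = rset T (h j₁) := hyR
                _ = rset T (h j₁ * p) := hGreen
                _ = rset T (h j') := hHj.1
            · calc lset T x = lset T (y * p) := by rw [hxyp]
                _ = lset T (h j₁ * p) := hLxx'
                _ = lset T (h j') := hHj.2
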